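/- Let k ∈ ℕ, k ≥ 1, and let Ψ : (0,∞) → ℂ be a measurable function with Ψ ∈ L^∞(0,∞). There exists a constant C > 0 such that for every z ≥ 1, | ∫_0^∞ Ψ(t) ∫_0^π ∂_t ∂_θ^k φ_t(θ) θ^{k-1} sin(zθ) dθ dt | ≤ C. -/

import Mathlib

/-!
Write `∂_t ∂_θ^k φ_t = Q φ_t`, where `Q` is a polynomial in `t`, `sin θ`, `cos θ`, `1 - cos θ`
whose monomials `tʳ sinᵃ θ cosᵇ θ (1 - cos θ)ᵉ` satisfy `2r ≤ a + 2e + k - 2`. On `[0, π]` we have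
`φ_t(θ) ≤ exp(-4tθ²/π²)`, so `θ` behaves like `t^(-1/2)` and the inner integral `I(z, t)` obeys
`|I| ≤ C z t^(-3/2)` (from `|sin zθ| ≤ zθ`) and `|I| ≤ C z⁻¹ t^(-1/2)` (from one integration by
parts against `(1 - cos zθ)/z`, which vanishes at `θ = 0`). Using the second bound for `t ≤ z²`
and the first for `t ≥ z²` gives `∫₀^∞ |I(z, t)| dt ≤ 4C` uniformly in `z`; pairing with
`Ψ ∈ L^∞` concludes.
-/

open MeasureTheory Set
open scoped ENNReal NNReal Real

noncomputable section

/-- `φ_t(θ) = exp(-2t(1 - cos θ))`. -/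
def phi (t θ : ℝ) : ℝ := Real.exp (-2 * t * (1 - Real.cos θ))

/-- `h_k(θ) = sin θ` if `k` is odd, `cos θ` if `k` is even. -/
def hfun (k : ℕ) (x : ℝ) : ℝ := if Odd k then Real.sin x else Real.cos x

/-- `G(n,t) = (1/π) ∫_0^π exp(-2t(1-cos θ)) cos(nθ) dθ`. -/
def Gker (n : ℤ) (t : ℝ) : ℝ :=
  (1 / Real.pi) * ∫ θ in (0:ℝ)..Real.pi, phi t θ * Real.cos ((n : ℝ) * θ)

/-- `H_k(z,t) = z^{-k} ∫_0^π ∂_θ^k φ_t(θ) h_k(zθ) dθ`. -/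
def Hker (k : ℕ) (z t : ℝ) : ℝ :=
  (1 / z ^ k) * ∫ θ in (0:ℝ)..Real.pi, iteratedDeriv k (phi t) θ * hfun k (z * θ)

/-- Kernel of the Laplace-transform-type multiplier:
`K_Ψ(n) = -∫_0^∞ Ψ(t) ∂_t G(n,t) dt`. -/
def Kker (Ψ : ℝ → ℂ) (n : ℤ) : ℂ :=
  -∫ t in Set.Ioi (0:ℝ), Ψ t * ((deriv (fun s => Gker n s) t : ℝ) : ℂ)

/-- The ball `B_ℤ(n₀, r₀) = {n ∈ ℤ : |n - n₀| ≤ r₀}`. -/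
def zball (n₀ : ℤ) (r₀ : ℝ) : Set ℤ := {n : ℤ | |(n : ℝ) - (n₀ : ℝ)| ≤ r₀}

/-- `b : ℤ → ℂ` is an `(H,p,2)`-atom: supported in a ball `B = B_ℤ(n₀,r₀)` with `r₀ ≥ 1`,
`ℓ²`-norm at most `(#B)^{1/2-1/p}`, and vanishing moments up to order `1/p - 1`. -/
def IsHAtom (p : ℝ) (b : ℤ → ℂ) : Prop :=
  ∃ (n₀ : ℤ) (r₀ : ℝ), 1 ≤ r₀ ∧
    (∀ n : ℤ, b n ≠ 0 → n ∈ zball n₀ r₀) ∧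
    Real.sqrt (∑' n : ℤ, ‖b n‖ ^ 2) ≤ ((zball n₀ r₀).ncard : ℝ) ^ ((1:ℝ)/2 - 1/p) ∧
    (∀ α : ℕ, (α : ℝ) ≤ 1/p - 1 → ∑' n : ℤ, (n : ℂ) ^ α * b n = 0)

open Real

structure TrigMonomial where
  c : ℝ
  (r a b e : ℕ)

abbrev TrigPoly := List TrigMonomial

namespace TrigMonomial

def eval (T : TrigMonomial) (t θ : ℝ) : ℝ :=
  T.c * t ^ T.r * sin θ ^ T.a * cos θ ^ T.b * (1 - cos θ) ^ T.e

/-- `∂_θ (T φ_t) / φ_t`; the last monomial comes from `∂_θ φ_t = -2t sin θ φ_t`. -/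
def derivθ (T : TrigMonomial) : TrigPoly :=
  [⟨T.c * T.a, T.r, T.a - 1, T.b + 1, T.e⟩,
   ⟨-(T.c * T.b), T.r, T.a + 1, T.b - 1, T.e⟩,
   ⟨T.c * T.e, T.r, T.a + 1, T.b, T.e - 1⟩,
   ⟨-(2 * T.c), T.r + 1, T.a + 1, T.b, T.e⟩]

/-- `∂_t (T φ_t) / φ_t`; the last monomial comes from `∂_t φ_t = -2(1 - cos θ) φ_t`. -/
def derivt (T : TrigMonomial) : TrigPoly :=
  [⟨T.c * T.r, T.r - 1, T.a, T.b, T.e⟩,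
   ⟨-(2 * T.c), T.r, T.a, T.b, T.e + 1⟩]

end TrigMonomial

namespace TrigPoly

def eval (L : TrigPoly) (t θ : ℝ) : ℝ := (L.map (·.eval t θ)).sum

def derivθ (L : TrigPoly) : TrigPoly := L.flatMap TrigMonomial.derivθ

def derivt (L : TrigPoly) : TrigPoly := L.flatMap TrigMonomial.derivt

@[simp] lemma eval_nil (t θ : ℝ) : eval [] t θ = 0 := rfl

@[simp] lemma eval_cons (T : TrigMonomial) (L : TrigPoly) (t θ : ℝ) :
    eval (T :: L) t θ = T.eval t θ + L.eval t θ := by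
  simp [eval]

@[simp] lemma eval_append (L L' : TrigPoly) (t θ : ℝ) :
    eval (L ++ L') t θ = L.eval t θ + L'.eval t θ := by
  simp [eval]

end TrigPoly

lemma hasDerivAt_phi_θ (t θ : ℝ) :
    HasDerivAt (phi t) (-2 * t * sin θ * phi t θ) θ := by
  convert (((hasDerivAt_cos θ).const_sub 1).const_mul (-2 * t)).exp using 1
  · rfl
  · rw [phi]; ring

lemma hasDerivAt_phi_t (t θ : ℝ) :
    HasDerivAt (fun s => phi s θ) (-2 * (1 - cos θ) * phi t θ) t := by
  convert (((hasDerivAt_id' t).const_mul (-2)).mul_const (1 - cos θ)).exp using 1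
  · rfl
  · rw [phi]; ring

namespace TrigMonomial

lemma hasDerivAt_eval_mul_phi_θ (T : TrigMonomial) (t θ : ℝ) :
    HasDerivAt (fun x => T.eval t x * phi t x) (T.derivθ.eval t θ * phi t θ) θ := by
  have h : HasDerivAt
      (fun x => T.c * t ^ T.r * (sin x ^ T.a * cos x ^ T.b * (1 - cos x) ^ T.e * phi t x)) _ θ :=
    ((((hasDerivAt_sin θ).pow T.a).mul ((hasDerivAt_cos θ).pow T.b)).mul
      (((hasDerivAt_cos θ).const_sub 1).pow T.e) |>.mul (hasDerivAt_phi_θ t θ)).const_mul _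
  convert h using 1
  · funext x; rw [eval]; ring
  · simp only [derivθ, TrigPoly.eval_cons, TrigPoly.eval_nil, eval, Pi.mul_apply, Pi.pow_apply]
    ring

lemma hasDerivAt_eval_mul_phi_t (T : TrigMonomial) (t θ : ℝ) :
    HasDerivAt (fun s => T.eval s θ * phi s θ) (T.derivt.eval t θ * phi t θ) t := by
  have h : HasDerivAt
      (fun s => T.c * (sin θ ^ T.a * cos θ ^ T.b * (1 - cos θ) ^ T.e) * (s ^ T.r * phi s θ)) _ t :=
    ((hasDerivAt_pow T.r t).mul (hasDerivAt_phi_t t θ)).const_mul _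
  convert h using 1
  · funext s; rw [eval]; ring
  · simp only [derivt, TrigPoly.eval_cons, TrigPoly.eval_nil, eval]
    ring

end TrigMonomial

namespace TrigPoly

lemma hasDerivAt_eval_mul_phi_θ (L : TrigPoly) (t θ : ℝ) :
    HasDerivAt (fun x => L.eval t x * phi t x) (L.derivθ.eval t θ * phi t θ) θ := by
  induction L with
  | nil => simpa [derivθ] using hasDerivAt_const θ (0 : ℝ)
  | cons T L ih =>
    simpa [derivθ, add_mul] using (T.hasDerivAt_eval_mul_phi_θ t θ).fun_add ih

lemma hasDerivAt_eval_mul_phi_t (L : TrigPoly) (t θ : ℝ) :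
    HasDerivAt (fun s => L.eval s θ * phi s θ) (L.derivt.eval t θ * phi t θ) t := by
  induction L with
  | nil => simpa [derivt] using hasDerivAt_const t (0 : ℝ)
  | cons T L ih =>
    simpa [derivt, add_mul] using (T.hasDerivAt_eval_mul_phi_t t θ).fun_add ih

end TrigPoly

def thetaDerivs : ℕ → TrigPoly
  | 0 => [⟨1, 0, 0, 0, 0⟩]
  | k + 1 => (thetaDerivs k).derivθ

lemma iteratedDeriv_phi (k : ℕ) (t : ℝ) :
    iteratedDeriv k (phi t) = fun θ => (thetaDerivs k).eval t θ * phi t θ := by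
  induction k with
  | zero => funext θ; simp [thetaDerivs, TrigPoly.eval, TrigMonomial.eval]
  | succ k ih =>
    funext θ
    rw [iteratedDeriv_succ, ih, ((thetaDerivs k).hasDerivAt_eval_mul_phi_θ t θ).deriv,
      thetaDerivs]

lemma deriv_iteratedDeriv_phi (k : ℕ) (t θ : ℝ) :
    deriv (fun s => iteratedDeriv k (phi s) θ) t = (thetaDerivs k).derivt.eval t θ * phi t θ := by
  simp only [iteratedDeriv_phi]
  exact ((thetaDerivs k).hasDerivAt_eval_mul_phi_t t θ).deriv

namespace TrigPoly

/-- Under the Gaussian scaling `θ ≈ t^(-1/2)` of `φ_t`, the monomial `tʳ sinᵃ θ (1 - cos θ)ᵉ` has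
size `(√t)^(2r - a - 2e)`; this exponent is at most `m` for every non-vanishing monomial. -/
def ScalingDegLE (m : ℤ) (L : TrigPoly) : Prop :=
  ∀ T ∈ L, T.c = 0 ∨ 2 * (T.r : ℤ) ≤ T.a + 2 * T.e + m

lemma ScalingDegLE.mono {m m' : ℤ} {L : TrigPoly} (h : L.ScalingDegLE m) (hm : m ≤ m') :
    L.ScalingDegLE m' := fun T hT => (h T hT).imp_right (·.trans (by omega))

lemma ScalingDegLE.derivθ {m : ℤ} {L : TrigPoly} (h : L.ScalingDegLE m) :
    L.derivθ.ScalingDegLE (m + 1) := by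
  intro T hT
  obtain ⟨S, hS, hTS⟩ := List.mem_flatMap.1 hT
  simp only [TrigMonomial.derivθ, List.mem_cons, List.not_mem_nil, or_false] at hTS
  rcases h S hS with h0 | hle
  · rcases hTS with rfl | rfl | rfl | rfl <;> simp [h0]
  · rcases S with ⟨c, r, _ | a, b, _ | e⟩ <;>
      rcases hTS with rfl | rfl | rfl | rfl <;> simp at hle ⊢ <;> omega

lemma ScalingDegLE.derivt {m : ℤ} {L : TrigPoly} (h : L.ScalingDegLE m) :
    L.derivt.ScalingDegLE (m - 2) := by
  intro T hT
  obtain ⟨S, hS, hTS⟩ := List.mem_flatMap.1 hT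
  simp only [TrigMonomial.derivt, List.mem_cons, List.not_mem_nil, or_false] at hTS
  rcases h S hS with h0 | hle
  · rcases hTS with rfl | rfl <;> simp [h0]
  · rcases S with ⟨c, _ | r, a, b, e⟩ <;>
      rcases hTS with rfl | rfl <;> simp at hle ⊢ <;> omega

end TrigPoly

lemma scalingDegLE_thetaDerivs (k : ℕ) : (thetaDerivs k).ScalingDegLE k := by
  induction k with
  | zero => simp [thetaDerivs, TrigPoly.ScalingDegLE]
  | succ k ih => exact_mod_cast ih.derivθ

lemma phi_nonneg (t θ : ℝ) : 0 ≤ phi t θ := (exp_pos _).le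

lemma phi_le_one {t : ℝ} (ht : 0 ≤ t) (θ : ℝ) : phi t θ ≤ 1 := by
  rw [phi, exp_le_one_iff]
  nlinarith [cos_le_one θ]

lemma phi_pi (t : ℝ) : phi t π = exp (-(4 * t)) := by
  rw [phi, cos_pi]; ring_nf

lemma phi_le_exp_neg_mul_sq {t θ : ℝ} (ht : 0 ≤ t) (hθ : |θ| ≤ π) :
    phi t θ ≤ exp (-(4 / π ^ 2 * t) * θ ^ 2) := by
  rw [phi, exp_le_exp]
  linear_combination 2 * mul_le_mul_of_nonneg_left (cos_le_one_sub_mul_cos_sq hθ) ht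

@[fun_prop]
lemma continuous_phi (t : ℝ) : Continuous (phi t) := by unfold phi; fun_prop

lemma exists_integral_pow_mul_phi_le (n : ℕ) :
    ∃ K, 0 ≤ K ∧ ∀ t > 0, ∫ θ in 0..π, θ ^ n * phi t θ ≤ K * t ^ (-((n : ℝ) + 1) / 2) := by
  refine ⟨(4 / π ^ 2) ^ (-((n : ℝ) + 1) / 2) * (1 / 2) * Gamma (((n : ℝ) + 1) / 2),
    by positivity, fun t ht => ?_⟩
  have hb : 0 < 4 / π ^ 2 * t := by positivity
  have hn : -1 < (n : ℝ) := by linarith [(n.cast_nonneg : (0 : ℝ) ≤ n)]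
  have hgauss := integral_rpow_mul_exp_neg_mul_rpow two_pos hn hb
  simp only [rpow_natCast, rpow_two] at hgauss
  have hint := integrableOn_rpow_mul_exp_neg_mul_sq hb hn
  simp only [rpow_natCast] at hint
  calc ∫ θ in 0..π, θ ^ n * phi t θ
      ≤ ∫ θ in Ioc 0 π, θ ^ n * exp (-(4 / π ^ 2 * t) * θ ^ 2) := by
        rw [intervalIntegral.integral_of_le pi_pos.le]
        refine setIntegral_mono_on ?_ (hint.mono_set Ioc_subset_Ioi_self) measurableSet_Ioc
          fun θ hθ => ?_
        · exact (Continuous.integrableOn_Icc (by fun_prop)).mono_set Ioc_subset_Icc_self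
        · have hθ0 : 0 ≤ θ := hθ.1.le
          gcongr
          exact phi_le_exp_neg_mul_sq ht.le (abs_le.2 ⟨by linarith [pi_pos], hθ.2⟩)
    _ ≤ ∫ θ in Ioi 0, θ ^ n * exp (-(4 / π ^ 2 * t) * θ ^ 2) := by
        refine setIntegral_mono_set hint ?_ Ioc_subset_Ioi_self.eventuallyLE
        filter_upwards [ae_restrict_mem measurableSet_Ioi] with θ hθ
        have : 0 < θ := hθ
        positivity
    _ = _ := by
        rw [hgauss, mul_rpow (by positivity) ht.le]
        ring

lemma integral_pow_mul_phi_le_pi_pow (n : ℕ) {t : ℝ} (ht : 0 ≤ t) :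
    ∫ θ in 0..π, θ ^ n * phi t θ ≤ π ^ (n + 1) := by
  calc ∫ θ in 0..π, θ ^ n * phi t θ ≤ ∫ _ in 0..π, π ^ n :=
        intervalIntegral.integral_mono_on pi_pos.le
          (Continuous.intervalIntegrable (by fun_prop) _ _) intervalIntegrable_const fun θ hθ =>
            (mul_le_mul (pow_le_pow_left₀ hθ.1 hθ.2 n) (phi_le_one ht θ) (phi_nonneg t θ)
              (by positivity)).trans_eq (mul_one _)
    _ = π ^ (n + 1) := by simp [pow_succ, mul_comm]

lemma pow_mul_exp_neg_le (r : ℕ) {t : ℝ} (ht : 0 < t) :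
    t ^ r * exp (-(4 * t)) ≤ (r + 1).factorial * t ^ (-(1 / 2) : ℝ) := by
  rcases le_total t 1 with ht1 | ht1
  · calc t ^ r * exp (-(4 * t)) ≤ 1 * 1 := by
          gcongr
          · exact pow_le_one₀ ht.le ht1
          · rw [exp_le_one_iff]; linarith
      _ ≤ (r + 1).factorial * t ^ (-(1 / 2) : ℝ) := by
          gcongr
          · exact_mod_cast Nat.one_le_iff_ne_zero.2 (Nat.factorial_ne_zero _)
          · exact one_le_rpow_of_pos_of_le_one_of_nonpos ht ht1 (by norm_num)
  · have hfac := pow_div_factorial_le_exp t ht.le (r + 1)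
    rw [div_le_iff₀ (by positivity)] at hfac
    calc t ^ r * exp (-(4 * t)) ≤ (r + 1).factorial * t ^ (-1 : ℝ) := by
          rw [rpow_neg_one, le_mul_inv_iff₀ ht]
          calc t ^ r * exp (-(4 * t)) * t = t ^ (r + 1) * exp (-(4 * t)) := by ring
            _ ≤ exp t * (r + 1).factorial * exp (-t) := by gcongr; linarith
            _ = (r + 1).factorial := by rw [mul_right_comm, ← exp_add]; simp
      _ ≤ (r + 1).factorial * t ^ (-(1 / 2) : ℝ) := by
          gcongr
          norm_num

lemma exists_pow_mul_integral_pow_mul_phi_le (r q : ℕ) {β : ℤ} (hβ : β ≤ 0)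
    (hdeg : 2 * (r : ℤ) ≤ q + 1 + β) :
    ∃ K, ∀ t > 0, t ^ r * ∫ θ in 0..π, θ ^ q * phi t θ ≤ K * t ^ ((β : ℝ) / 2) := by
  obtain ⟨K, hK0, hK⟩ := exists_integral_pow_mul_phi_le q
  refine ⟨max K (π ^ (q + 1)), fun t ht => ?_⟩
  have hint_nonneg : 0 ≤ ∫ θ in 0..π, θ ^ q * phi t θ :=
    intervalIntegral.integral_nonneg pi_pos.le fun θ hθ =>
      mul_nonneg (pow_nonneg hθ.1 q) (phi_nonneg t θ)
  rcases le_total t 1 with ht1 | ht1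
  · have hβ' : (β : ℝ) / 2 ≤ 0 := by
      have : (β : ℝ) ≤ 0 := by exact_mod_cast hβ
      linarith
    calc t ^ r * ∫ θ in 0..π, θ ^ q * phi t θ ≤ 1 * π ^ (q + 1) := by
          gcongr
          · exact pow_le_one₀ ht.le ht1
          · exact integral_pow_mul_phi_le_pi_pow q ht.le
      _ = π ^ (q + 1) * 1 := by ring
      _ ≤ max K (π ^ (q + 1)) * t ^ ((β : ℝ) / 2) :=
          mul_le_mul (le_max_right _ _) (one_le_rpow_of_pos_of_le_one_of_nonpos ht ht1 hβ')
            zero_le_one (le_max_of_le_left hK0)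
  · have hexp : (r : ℝ) + -((q : ℝ) + 1) / 2 ≤ (β : ℝ) / 2 := by
      have : (2 * r : ℝ) ≤ q + 1 + β := by exact_mod_cast hdeg
      linarith
    calc t ^ r * ∫ θ in 0..π, θ ^ q * phi t θ
        ≤ t ^ r * (K * t ^ (-((q : ℝ) + 1) / 2)) := by gcongr; exact hK t ht
      _ = K * t ^ ((r : ℝ) + -((q : ℝ) + 1) / 2) := by rw [rpow_add ht, rpow_natCast]; ring
      _ ≤ max K (π ^ (q + 1)) * t ^ ((β : ℝ) / 2) := by
          gcongr
          exact le_max_left _ _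

namespace TrigMonomial

@[fun_prop]
lemma continuous_eval_right (T : TrigMonomial) (t : ℝ) : Continuous (T.eval t) := by
  unfold eval; fun_prop

lemma abs_eval_le {T : TrigMonomial} {t θ : ℝ} (ht : 0 ≤ t) (hθ : θ ∈ Icc 0 π) :
    |T.eval t θ| ≤ |T.c| * t ^ T.r * θ ^ (T.a + 2 * T.e) := by
  have hsin : |sin θ| ≤ θ := by
    rw [abs_of_nonneg (sin_nonneg_of_nonneg_of_le_pi hθ.1 hθ.2)]; exact sin_le hθ.1
  have hvers : |1 - cos θ| ≤ θ ^ 2 := by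
    rw [abs_of_nonneg (by linarith [cos_le_one θ])]
    nlinarith [one_sub_sq_div_two_le_cos (x := θ)]
  calc |T.eval t θ| = |T.c| * t ^ T.r * |sin θ| ^ T.a * |cos θ| ^ T.b * |1 - cos θ| ^ T.e := by
        simp [eval, abs_mul, abs_pow, abs_of_nonneg ht]
    _ ≤ |T.c| * t ^ T.r * θ ^ T.a * 1 ^ T.b * (θ ^ 2) ^ T.e := by
        have := hθ.1
        gcongr
        exact abs_cos_le_one θ
    _ = |T.c| * t ^ T.r * θ ^ (T.a + 2 * T.e) := by ring

lemma abs_eval_pi_le (T : TrigMonomial) {t : ℝ} (ht : 0 ≤ t) :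
    |T.eval t π| ≤ |T.c| * 2 ^ T.e * t ^ T.r := by
  rcases T with ⟨c, r, _ | a, b, e⟩
  · simp only [eval, sin_pi, cos_pi, pow_zero, mul_one, abs_mul, abs_pow, abs_of_nonneg ht,
      abs_neg, abs_one, one_pow]
    norm_num
    exact (mul_right_comm _ _ _).le
  · simp only [eval, sin_pi, zero_pow a.succ_ne_zero, mul_zero, zero_mul, abs_zero]
    positivity

lemma exists_integral_abs_eval_mul_phi_le (T : TrigMonomial) (w : ℕ) {β : ℤ} (hβ : β ≤ 0)
    (hT : T.c = 0 ∨ 2 * (T.r : ℤ) ≤ T.a + 2 * T.e + (w + 1 + β)) :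
    ∃ C, ∀ t > 0, ∫ θ in 0..π, |T.eval t θ| * phi t θ * θ ^ w ≤ C * t ^ ((β : ℝ) / 2) := by
  rcases hT with hc | hdeg
  · exact ⟨0, fun t _ => by simp [eval, hc]⟩
  set q := T.a + 2 * T.e + w
  obtain ⟨K, hK⟩ := exists_pow_mul_integral_pow_mul_phi_le T.r q hβ (by omega)
  refine ⟨|T.c| * K, fun t ht => ?_⟩
  calc ∫ θ in 0..π, |T.eval t θ| * phi t θ * θ ^ w
      ≤ ∫ θ in 0..π, |T.c| * (t ^ T.r * (θ ^ q * phi t θ)) := by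
        refine intervalIntegral.integral_mono_on pi_pos.le (Continuous.intervalIntegrable
          (by fun_prop) _ _) (Continuous.intervalIntegrable (by fun_prop) _ _) fun θ hθ => ?_
        have := hθ.1
        have := phi_nonneg t θ
        calc |T.eval t θ| * phi t θ * θ ^ w
            ≤ |T.c| * t ^ T.r * θ ^ (T.a + 2 * T.e) * phi t θ * θ ^ w := by
              gcongr; exact abs_eval_le ht.le hθ
          _ = |T.c| * (t ^ T.r * (θ ^ q * phi t θ)) := by ring
    _ = |T.c| * (t ^ T.r * ∫ θ in 0..π, θ ^ q * phi t θ) := by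
        rw [intervalIntegral.integral_const_mul, intervalIntegral.integral_const_mul]
    _ ≤ |T.c| * K * t ^ ((β : ℝ) / 2) := by
        rw [mul_assoc]; exact mul_le_mul_of_nonneg_left (hK t ht) (abs_nonneg _)

end TrigMonomial

namespace TrigPoly

@[fun_prop]
lemma continuous_eval_right (L : TrigPoly) (t : ℝ) : Continuous (L.eval t) :=
  continuous_list_sum L fun T _ => T.continuous_eval_right t

lemma exists_integral_abs_eval_mul_phi_le (L : TrigPoly) (w : ℕ) {β : ℤ} (hβ : β ≤ 0)
    (hL : L.ScalingDegLE (w + 1 + β)) :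
    ∃ C, ∀ t > 0, ∫ θ in 0..π, |L.eval t θ| * phi t θ * θ ^ w ≤ C * t ^ ((β : ℝ) / 2) := by
  induction L with
  | nil => exact ⟨0, fun t _ => by simp⟩
  | cons T L ih =>
    obtain ⟨C₁, hC₁⟩ := T.exists_integral_abs_eval_mul_phi_le w hβ (hL T List.mem_cons_self)
    obtain ⟨C₂, hC₂⟩ := ih fun S hS => hL S (List.mem_cons_of_mem T hS)
    refine ⟨C₁ + C₂, fun t ht => ?_⟩
    calc ∫ θ in 0..π, |eval (T :: L) t θ| * phi t θ * θ ^ w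
        ≤ ∫ θ in 0..π, (|T.eval t θ| * phi t θ * θ ^ w + |eval L t θ| * phi t θ * θ ^ w) := by
          refine intervalIntegral.integral_mono_on pi_pos.le (Continuous.intervalIntegrable
            (by fun_prop) _ _) (Continuous.intervalIntegrable (by fun_prop) _ _) fun θ hθ => ?_
          have := hθ.1
          have := phi_nonneg t θ
          rw [eval_cons, ← add_mul, ← add_mul]
          gcongr
          exact abs_add_le _ _
      _ = (∫ θ in 0..π, |T.eval t θ| * phi t θ * θ ^ w)
          + ∫ θ in 0..π, |eval L t θ| * phi t θ * θ ^ w :=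
          intervalIntegral.integral_add (Continuous.intervalIntegrable (by fun_prop) _ _)
            (Continuous.intervalIntegrable (by fun_prop) _ _)
      _ ≤ (C₁ + C₂) * t ^ ((β : ℝ) / 2) := by
          rw [add_mul]; exact add_le_add (hC₁ t ht) (hC₂ t ht)

lemma exists_abs_eval_pi_mul_phi_le (L : TrigPoly) :
    ∃ C, ∀ t > 0, |L.eval t π| * phi t π ≤ C * t ^ (-(1 / 2) : ℝ) := by
  induction L with
  | nil => exact ⟨0, fun t _ => by simp⟩
  | cons T L ih =>
    obtain ⟨C, hC⟩ := ih
    refine ⟨|T.c| * 2 ^ T.e * (T.r + 1).factorial + C, fun t ht => ?_⟩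
    have := phi_nonneg t π
    calc |eval (T :: L) t π| * phi t π ≤ |T.eval t π| * phi t π + |eval L t π| * phi t π := by
          rw [eval_cons, ← add_mul]; gcongr; exact abs_add_le _ _
      _ ≤ |T.c| * 2 ^ T.e * ((T.r + 1).factorial * t ^ (-(1 / 2) : ℝ))
          + C * t ^ (-(1 / 2) : ℝ) := by
          gcongr ?_ + ?_
          · rw [phi_pi]
            calc |T.eval t π| * exp (-(4 * t)) ≤ |T.c| * 2 ^ T.e * t ^ T.r * exp (-(4 * t)) := by
                  gcongr; exact T.abs_eval_pi_le ht.le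
              _ ≤ _ := by
                  rw [mul_assoc]
                  exact mul_le_mul_of_nonneg_left (pow_mul_exp_neg_le T.r ht) (by positivity)
          · exact hC t ht
      _ = _ := by ring

end TrigPoly

lemma abs_integral_mul_sin_le {u : ℝ → ℝ} (hu : Continuous u) {b z : ℝ} (hb : 0 ≤ b)
    (hz : 0 ≤ z) : |∫ θ in 0..b, u θ * sin (z * θ)| ≤ z * ∫ θ in 0..b, |u θ| * θ := by
  rw [← intervalIntegral.integral_const_mul, ← Real.norm_eq_abs]
  refine intervalIntegral.norm_integral_le_of_norm_le hb (ae_of_all _ fun θ hθ => ?_)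
    (Continuous.intervalIntegrable (by fun_prop) _ _)
  have hzθ : 0 ≤ z * θ := mul_nonneg hz hθ.1.le
  have hsin : |sin (z * θ)| ≤ z * θ := abs_sin_le_abs.trans (abs_of_nonneg hzθ).le
  rw [Real.norm_eq_abs, abs_mul]
  calc |u θ| * |sin (z * θ)| ≤ |u θ| * (z * θ) := by gcongr
    _ = z * (|u θ| * θ) := by ring

lemma abs_integral_mul_sin_le_of_hasDerivAt {u u' : ℝ → ℝ} (hu : ∀ x, HasDerivAt u (u' x) x)
    (hu' : Continuous u') {b z : ℝ} (hb : 0 ≤ b) (hz : 0 < z) :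
    |∫ θ in 0..b, u θ * sin (z * θ)| ≤ 2 / z * (|u b| + ∫ θ in 0..b, |u' θ|) := by
  set v : ℝ → ℝ := fun θ => (1 - cos (z * θ)) / z
  have hv : ∀ x, HasDerivAt v (sin (z * x)) x := fun x =>
    ((((hasDerivAt_id' x).const_mul z).cos.const_sub 1).div_const z).congr_deriv (by field_simp)
  have hv_le : ∀ x, |v x| ≤ 2 / z := fun x => by
    rw [abs_div, abs_of_pos hz]
    gcongr
    rw [abs_le]; constructor <;> linarith [neg_one_le_cos (z * x), cos_le_one (z * x)]
  have hibp := intervalIntegral.integral_mul_deriv_eq_deriv_mul (fun x _ => hu x)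
    (fun x _ => hv x) (hu'.intervalIntegrable 0 b) (Continuous.intervalIntegrable (by fun_prop) 0 b)
  have hrest : |∫ θ in 0..b, u' θ * v θ| ≤ (∫ θ in 0..b, |u' θ|) * (2 / z) := by
    rw [← intervalIntegral.integral_mul_const, ← Real.norm_eq_abs]
    refine intervalIntegral.norm_integral_le_of_norm_le hb (ae_of_all _ fun θ _ => ?_)
      (Continuous.intervalIntegrable (by fun_prop) _ _)
    rw [Real.norm_eq_abs, abs_mul]
    gcongr
    exact hv_le θ
  have hv0 : v 0 = 0 := by simp [v]
  calc |∫ θ in 0..b, u θ * sin (z * θ)|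
      = |u b * v b - ∫ θ in 0..b, u' θ * v θ| := by rw [hibp, hv0, mul_zero, sub_zero]
    _ ≤ |u b| * (2 / z) + (∫ θ in 0..b, |u' θ|) * (2 / z) := by
        refine (abs_sub _ _).trans (add_le_add ?_ hrest)
        rw [abs_mul]
        gcongr
        exact hv_le b
    _ = _ := by ring

namespace TrigPoly

lemma exists_abs_integral_mul_sin_le_mul (L : TrigPoly) (w : ℕ) (hL : L.ScalingDegLE (w - 1)) :
    ∃ C, ∀ z ≥ 0, ∀ t > 0,
      |∫ θ in 0..π, L.eval t θ * phi t θ * θ ^ w * sin (z * θ)| ≤ z * C * t ^ (-(3 / 2) : ℝ) := by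
  obtain ⟨C, hC⟩ := L.exists_integral_abs_eval_mul_phi_le (w + 1) (β := -3) (by norm_num)
    (hL.mono (by push_cast; omega))
  refine ⟨C, fun z hz t ht => ?_⟩
  calc |∫ θ in 0..π, L.eval t θ * phi t θ * θ ^ w * sin (z * θ)|
      ≤ z * ∫ θ in 0..π, |L.eval t θ * phi t θ * θ ^ w| * θ :=
        abs_integral_mul_sin_le (by fun_prop) pi_pos.le hz
    _ = z * ∫ θ in 0..π, |L.eval t θ| * phi t θ * θ ^ (w + 1) := by
        congr 1
        refine intervalIntegral.integral_congr fun θ hθ => ?_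
        rw [uIcc_of_le pi_pos.le] at hθ
        simp only [abs_mul, abs_of_nonneg (phi_nonneg t θ), abs_of_nonneg (pow_nonneg hθ.1 w)]
        ring
    _ ≤ z * (C * t ^ ((-3 : ℤ) / 2 : ℝ)) := by gcongr; exact hC t ht
    _ = z * C * t ^ (-(3 / 2) : ℝ) := by push_cast; ring_nf

lemma exists_integral_abs_deriv_le (L : TrigPoly) (w : ℕ) (hL : L.ScalingDegLE (w - 1)) :
    ∃ C, ∀ t > 0, ∫ θ in 0..π, |L.derivθ.eval t θ * phi t θ * θ ^ w
      + L.eval t θ * phi t θ * (w * θ ^ (w - 1))| ≤ C * t ^ (-(1 / 2) : ℝ) := by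
  obtain ⟨C₁, hC₁⟩ := L.derivθ.exists_integral_abs_eval_mul_phi_le w (β := -1) (by norm_num)
    (hL.derivθ.mono (by omega))
  obtain ⟨C₂, hC₂⟩ := L.exists_integral_abs_eval_mul_phi_le (w - 1) (β := -1) (by norm_num)
    (hL.mono (by omega))
  refine ⟨C₁ + w * C₂, fun t ht => ?_⟩
  have hexp : ((-1 : ℤ) : ℝ) / 2 = -(1 / 2) := by norm_num
  have h₁ := hC₁ t ht
  have h₂ := hC₂ t ht
  rw [hexp] at h₁ h₂
  calc _ ≤ ∫ θ in 0..π, (|L.derivθ.eval t θ| * phi t θ * θ ^ w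
        + w * (|L.eval t θ| * phi t θ * θ ^ (w - 1))) := by
        refine intervalIntegral.integral_mono_on pi_pos.le (Continuous.intervalIntegrable
          (by fun_prop) _ _) (Continuous.intervalIntegrable (by fun_prop) _ _) fun θ hθ => ?_
        refine (abs_add_le _ _).trans_eq ?_
        simp only [abs_mul, abs_of_nonneg (phi_nonneg t θ), abs_of_nonneg (pow_nonneg hθ.1 _),
          Nat.abs_cast]
        ring
    _ = (∫ θ in 0..π, |L.derivθ.eval t θ| * phi t θ * θ ^ w)
        + w * ∫ θ in 0..π, |L.eval t θ| * phi t θ * θ ^ (w - 1) := by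
        rw [intervalIntegral.integral_add (Continuous.intervalIntegrable (by fun_prop) _ _)
          (Continuous.intervalIntegrable (by fun_prop) _ _), intervalIntegral.integral_const_mul]
    _ ≤ C₁ * t ^ (-(1 / 2) : ℝ) + w * (C₂ * t ^ (-(1 / 2) : ℝ)) := by gcongr
    _ = _ := by ring

lemma exists_abs_integral_mul_sin_le_div (L : TrigPoly) (w : ℕ) (hL : L.ScalingDegLE (w - 1)) :
    ∃ C, ∀ z > 0, ∀ t > 0,
      |∫ θ in 0..π, L.eval t θ * phi t θ * θ ^ w * sin (z * θ)| ≤ C / z * t ^ (-(1 / 2) : ℝ) := by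
  obtain ⟨C₀, hC₀⟩ := L.exists_abs_eval_pi_mul_phi_le
  obtain ⟨C₁, hC₁⟩ := L.exists_integral_abs_deriv_le w hL
  refine ⟨2 * (C₀ * π ^ w + C₁), fun z hz t ht => ?_⟩
  have hboundary : |L.eval t π * phi t π * π ^ w| ≤ C₀ * t ^ (-(1 / 2) : ℝ) * π ^ w := by
    rw [abs_mul, abs_mul, abs_of_nonneg (phi_nonneg t π), abs_of_nonneg (pow_nonneg pi_pos.le w)]
    exact mul_le_mul_of_nonneg_right (hC₀ t ht) (pow_nonneg pi_pos.le w)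
  calc _ ≤ 2 / z * (|L.eval t π * phi t π * π ^ w| + ∫ θ in 0..π, |L.derivθ.eval t θ * phi t θ
          * θ ^ w + L.eval t θ * phi t θ * (w * θ ^ (w - 1))|) :=
        abs_integral_mul_sin_le_of_hasDerivAt
          (fun x => (L.hasDerivAt_eval_mul_phi_θ t x).mul (hasDerivAt_pow w x)) (by fun_prop)
          pi_pos.le hz
    _ ≤ 2 / z * (C₀ * t ^ (-(1 / 2) : ℝ) * π ^ w + C₁ * t ^ (-(1 / 2) : ℝ)) := by
        gcongr; exact hC₁ t ht
    _ = _ := by ring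

end TrigPoly

def decayBound (z A B t : ℝ) : ℝ := min (z * A * t ^ (-(3 / 2) : ℝ)) (B / z * t ^ (-(1 / 2) : ℝ))

section decayBound

variable {z A B : ℝ}

lemma integrableOn_decayBound (hz : 0 < z) (hA : 0 ≤ A) (hB : 0 ≤ B) :
    IntegrableOn (decayBound z A B) (Ioi 0) := by
  have hsplit : Ioc 0 (z ^ 2) ∪ Ioi (z ^ 2) = Ioi (0 : ℝ) := Ioc_union_Ioi_eq_Ioi (by positivity)
  have hmeas (s : Set ℝ) (hs : s ⊆ Ioi 0) (hsm : MeasurableSet s) :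
      AEStronglyMeasurable (decayBound z A B) (volume.restrict s) := by
    refine ContinuousOn.aestronglyMeasurable ?_ hsm
    refine ContinuousOn.inf ?_ ?_ <;>
      exact continuousOn_const.mul (continuousOn_id.rpow_const fun t ht => Or.inl (hs ht).ne')
  have hnorm (t : ℝ) (ht : 0 < t) : ‖decayBound z A B t‖ = decayBound z A B t :=
    Real.norm_of_nonneg (le_min (by positivity) (by positivity))
  rw [← hsplit]
  refine IntegrableOn.union ?_ ?_
  · refine Integrable.mono' (((intervalIntegral.intervalIntegrable_rpow' (a := 0) (b := z ^ 2)
      (by norm_num : (-1 : ℝ) < -(1 / 2))).const_mul (B / z)).1) (hmeas _ Ioc_subset_Ioi_self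
      measurableSet_Ioc) ?_
    filter_upwards [ae_restrict_mem measurableSet_Ioc] with t ht
    rw [hnorm t ht.1]
    exact min_le_right _ _
  · refine Integrable.mono' ((integrableOn_Ioi_rpow_of_lt (by norm_num : -(3 / 2 : ℝ) < -1)
      (by positivity : 0 < z ^ 2)).const_mul (z * A)) (hmeas _ (Ioi_subset_Ioi (by positivity))
      measurableSet_Ioi) ?_
    filter_upwards [ae_restrict_mem measurableSet_Ioi] with t ht
    rw [hnorm t ((by positivity : (0 : ℝ) < z ^ 2).trans ht)]
    exact min_le_left _ _

lemma integral_decayBound_le (hz : 0 < z) (hA : 0 ≤ A) (hB : 0 ≤ B) :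
    ∫ t in Ioi 0, decayBound z A B t ≤ 2 * A + 2 * B := by
  have hz2 : 0 < z ^ 2 := by positivity
  have hsq (s : ℝ) : (z ^ 2) ^ s = z ^ (2 * s) := by
    rw [← rpow_natCast, ← rpow_mul hz.le]; norm_num
  have hint := integrableOn_decayBound hz hA hB
  rw [← Ioc_union_Ioi_eq_Ioi hz2.le, setIntegral_union (Ioc_disjoint_Ioi le_rfl) measurableSet_Ioi
    (hint.mono_set Ioc_subset_Ioi_self) (hint.mono_set (Ioi_subset_Ioi hz2.le))]
  have hsmall : ∫ t in Ioc 0 (z ^ 2), decayBound z A B t ≤ 2 * B := by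
    have hpow : (-1 : ℝ) < -(1 / 2) := by norm_num
    calc ∫ t in Ioc 0 (z ^ 2), decayBound z A B t
        ≤ ∫ t in Ioc 0 (z ^ 2), B / z * t ^ (-(1 / 2) : ℝ) :=
          setIntegral_mono_on (hint.mono_set Ioc_subset_Ioi_self)
            ((intervalIntegral.intervalIntegrable_rpow' hpow).const_mul (B / z)).1
            measurableSet_Ioc fun t _ => min_le_right _ _
      _ = 2 * B := by
          rw [integral_const_mul, ← intervalIntegral.integral_of_le hz2.le,
            integral_rpow (.inl hpow), hsq, zero_rpow (by norm_num)]
          norm_num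
          field_simp
  have hlarge : ∫ t in Ioi (z ^ 2), decayBound z A B t ≤ 2 * A := by
    have hpow : -(3 / 2) < (-1 : ℝ) := by norm_num
    calc ∫ t in Ioi (z ^ 2), decayBound z A B t
        ≤ ∫ t in Ioi (z ^ 2), z * A * t ^ (-(3 / 2) : ℝ) :=
          setIntegral_mono_on (hint.mono_set (Ioi_subset_Ioi hz2.le))
            ((integrableOn_Ioi_rpow_of_lt hpow hz2).const_mul (z * A))
            measurableSet_Ioi fun t _ => min_le_left _ _
      _ = 2 * A := by
          rw [integral_const_mul, integral_Ioi_rpow_of_lt hpow hz2, hsq]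
          norm_num [rpow_neg_one]
          field_simp
  linarith

end decayBound

lemma exists_norm_integral_mul_le {Ψ : ℝ → ℂ} (hΨ : MemLp Ψ ⊤ (volume.restrict (Ioi (0 : ℝ))))
    {F : ℝ → ℝ → ℝ} {A B : ℝ} (hF : ∀ z ≥ 1, ∀ t > 0, |F z t| ≤ decayBound z A B t) :
    ∃ C, 0 < C ∧ ∀ z ≥ 1, ‖∫ t in Ioi (0 : ℝ), Ψ t * (F z t : ℂ)‖ ≤ C := by
  have hA : 0 ≤ A := by
    simpa [decayBound] using (abs_nonneg _).trans ((hF 1 le_rfl 1 one_pos).trans (min_le_left _ _))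
  have hB : 0 ≤ B := by
    simpa [decayBound] using (abs_nonneg _).trans ((hF 1 le_rfl 1 one_pos).trans (min_le_right _ _))
  set N := lpNorm Ψ ⊤ (volume.restrict (Ioi (0 : ℝ)))
  have hN : 0 ≤ N := lpNorm_nonneg
  refine ⟨N * (2 * A + 2 * B) + 1, by positivity, fun z hz => ?_⟩
  have hz0 : 0 < z := one_pos.trans_le hz
  calc ‖∫ t in Ioi (0 : ℝ), Ψ t * (F z t : ℂ)‖ ≤ ∫ t in Ioi (0 : ℝ), N * decayBound z A B t := by
        refine norm_integral_le_of_norm_le ((integrableOn_decayBound hz0 hA hB).const_mul N) ?_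
        filter_upwards [ae_le_lpNorm_exponent_top hΨ, ae_restrict_mem measurableSet_Ioi]
          with t hΨt ht
        rw [norm_mul, Complex.norm_real, Real.norm_eq_abs]
        exact mul_le_mul hΨt (hF z hz t ht) (abs_nonneg _) hN
    _ ≤ N * (2 * A + 2 * B) + 1 := by
        rw [integral_const_mul]
        linarith [mul_le_mul_of_nonneg_left (integral_decayBound_le hz0 hA hB) hN]

theorem psi_integral_bounded_general (k : ℕ) (Ψ : ℝ → ℂ)
    (hΨ : MemLp Ψ ⊤ (volume.restrict (Set.Ioi (0:ℝ)))) :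
    ∃ C : ℝ, 0 < C ∧ ∀ z : ℝ, 1 ≤ z →
      ‖∫ t in Set.Ioi (0:ℝ), Ψ t *
          ((∫ θ in (0:ℝ)..Real.pi,
              deriv (fun s => iteratedDeriv k (phi s) θ) t * θ ^ (k - 1) * Real.sin (z * θ) : ℝ) : ℂ)‖
        ≤ C := by
  simp only [deriv_iteratedDeriv_phi]
  set L := (thetaDerivs k).derivt
  have hL : L.ScalingDegLE ((k - 1 : ℕ) - 1) := (scalingDegLE_thetaDerivs k).derivt.mono (by omega)
  obtain ⟨A, hA⟩ := L.exists_abs_integral_mul_sin_le_mul (k - 1) hL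
  obtain ⟨B, hB⟩ := L.exists_abs_integral_mul_sin_le_div (k - 1) hL
  exact exists_norm_integral_mul_le hΨ fun z hz t ht =>
    le_min (hA z (zero_le_one.trans hz) t ht) (hB z (zero_lt_one.trans_le hz) t ht)

/-- Proposition 2.7: uniform bound for the Psi-averaged integrals. -/
theorem psi_integral_bounded (k : ℕ) (hk : 1 ≤ k) (Ψ : ℝ → ℂ)
    (hΨ : MemLp Ψ ⊤ (volume.restrict (Set.Ioi (0:ℝ)))) :
    ∃ C : ℝ, 0 < C ∧ ∀ z : ℝ, 1 ≤ z →
      ‖∫ t in Set.Ioi (0:ℝ), Ψ t *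
          ((∫ θ in (0:ℝ)..Real.pi,
              deriv (fun s => iteratedDeriv k (phi s) θ) t * θ ^ (k - 1) * Real.sin (z * θ) : ℝ) : ℂ)‖
        ≤ C :=
  psi_integral_bounded_general k Ψ hΨ
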